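/- arXiv:1806.04850 — 3 statements merged into one kernel-verified Lean document; each statement's English description precedes it below -/
import Mathlib

section
/- Let q be a prime power, n ≥ 1, and ψ : F_q → ℂˣ a nontrivial additive character. Let χ₁, χ₂ : F_{q^n}ˣ → ℂˣ be multiplicative characters such that G(χ₁·η, ψ) = G(χ₂·η, ψ) for every multiplicative character η : F_qˣ → ℂˣ. Then for every a ∈ F_qˣ, the sums over the norm-one fibers agree: Σ_{b ∈ F_{q^n}ˣ, Nm(b) = a} χ₁(b)·ψ(Tr(b)) = Σ_{b ∈ F_{q^n}ˣ, Nm(b) = a} χ₂(b)·ψ(Tr(b)). -/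
open scoped Classical

/-- The Gauss sum over `E` of the character `χ` twisted by the character `η` of the
base field `F` (pulled back via the norm map), with respect to the additive
character `ψ` of `F` (composed with the trace map):
`G(χ·η, ψ) = ∑_{x ∈ Eˣ} χ(x) η(Nm(x)) ψ(Tr(x))`. -/
noncomputable def twistedGaussSum (F : Type) {E : Type} [Field F] [Field E] [Fintype F]
    [Fintype E] [Algebra F E] (χ : Eˣ →* ℂˣ) (η : Fˣ →* ℂˣ) (ψ : AddChar F ℂ) : ℂ :=
  ∑ x : Eˣ, ((χ x : ℂ) * (η (Units.map (Algebra.norm F : E →* F) x) : ℂ)) *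
    ψ (Algebra.trace F E (x : E))

section Aux

variable {G : Type*} [CommGroup G] [Finite G]

instance aux_finite_dual : Finite (G →* ℂˣ) := by
  have : NeZero ((Monoid.exponent G : ℂ)) := by
    have : NeZero (Monoid.exponent G) := ⟨Monoid.exponent_ne_zero_of_finite⟩
    exact ⟨Nat.cast_ne_zero.mpr this.out⟩
  exact Finite.of_equiv G
    (CommGroup.monoidHom_mulEquiv_of_hasEnoughRootsOfUnity G ℂ).some.symm.toEquiv

lemma aux_sum_char_eq_zero [Fintype (G →* ℂˣ)] {x : G} (hx : x ≠ 1) :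
    ∑ η : G →* ℂˣ, (η x : ℂ) = 0 := by
  have : NeZero ((Monoid.exponent G : ℂ)) := by
    have : NeZero (Monoid.exponent G) := ⟨Monoid.exponent_ne_zero_of_finite⟩
    exact ⟨Nat.cast_ne_zero.mpr this.out⟩
  obtain ⟨η₀, hη₀⟩ := CommGroup.exists_apply_ne_one_of_hasEnoughRootsOfUnity G ℂ hx
  have key : (η₀ x : ℂ) * ∑ η : G →* ℂˣ, (η x : ℂ) = ∑ η : G →* ℂˣ, (η x : ℂ) := by
    rw [Finset.mul_sum]
    exact Fintype.sum_bijective (fun η => η₀ * η)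
      (Group.mulLeft_bijective η₀) _ _ (fun η => by simp)
  have hne : (η₀ x : ℂ) ≠ 1 := fun hc => hη₀ (Units.ext hc)
  have := sub_eq_zero.mpr key
  rw [← sub_one_mul] at this
  rcases mul_eq_zero.mp this with h | h
  · exact absurd (sub_eq_zero.mp h) hne
  · exact h

end Aux

theorem norm_fiber_sums_agree_of_twisted_gauss_sums_agree
    (q n : ℕ) (hq : IsPrimePow q) (hn : 1 ≤ n)
    (F E : Type) [Field F] [Field E] [Fintype F] [Fintype E] [Algebra F E]
    (hF : Fintype.card F = q) (hE : Fintype.card E = q ^ n)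
    (ψ : AddChar F ℂ) (hψ : ψ ≠ 1)
    (χ₁ χ₂ : Eˣ →* ℂˣ)
    (h : ∀ η : Fˣ →* ℂˣ, twistedGaussSum F χ₁ η ψ = twistedGaussSum F χ₂ η ψ) :
    ∀ a : Fˣ,
      (∑ b ∈ Finset.univ.filter (fun b : Eˣ => Algebra.norm F (b : E) = (a : F)),
        (χ₁ b : ℂ) * ψ (Algebra.trace F E (b : E)))
      = ∑ b ∈ Finset.univ.filter (fun b : Eˣ => Algebra.norm F (b : E) = (a : F)),
        (χ₂ b : ℂ) * ψ (Algebra.trace F E (b : E)) := by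
  classical
  have : Fintype (Fˣ →* ℂˣ) := Fintype.ofFinite _
  -- the difference function on fibers
  set g : Fˣ → ℂ := fun a =>
    ∑ b ∈ Finset.univ.filter (fun b : Eˣ => Algebra.norm F (b : E) = (a : F)),
      ((χ₁ b : ℂ) - (χ₂ b : ℂ)) * ψ (Algebra.trace F E (b : E)) with hg
  -- hypothesis rewritten: for all η, ∑ a, η a * g a = 0
  have key : ∀ η : Fˣ →* ℂˣ, ∑ a : Fˣ, (η a : ℂ) * g a = 0 := by
    intro η
    have hts : ∀ χ : Eˣ →* ℂˣ, twistedGaussSum F χ η ψ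
        = ∑ a : Fˣ, (η a : ℂ) *
          ∑ b ∈ Finset.univ.filter (fun b : Eˣ => Algebra.norm F (b : E) = (a : F)),
            (χ b : ℂ) * ψ (Algebra.trace F E (b : E)) := by
      intro χ
      rw [twistedGaussSum,
        ← Finset.sum_fiberwise Finset.univ
          (fun x : Eˣ => Units.map (Algebra.norm F : E →* F) x)
          (fun x : Eˣ => ((χ x : ℂ) * (η (Units.map (Algebra.norm F : E →* F) x) : ℂ)) *
            ψ (Algebra.trace F E (x : E)))]
      refine Finset.sum_congr rfl fun a _ => ?_
      rw [Finset.mul_sum]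
      refine Finset.sum_congr ?_ fun b hb => ?_
      · refine Finset.filter_congr fun b _ => ?_
        constructor
        · intro hb; rw [← hb]; rfl
        · intro hb; exact Units.ext hb
      · simp only [Finset.mem_filter] at hb
        have : Units.map (Algebra.norm F : E →* F) b = a := Units.ext hb.2
        rw [this]; ring
    have := h η
    rw [hts χ₁, hts χ₂, ← sub_eq_zero, ← Finset.sum_sub_distrib] at this
    rw [← this]
    refine Finset.sum_congr rfl fun a _ => ?_
    rw [← mul_sub]
    congr 1
    simp only [hg]
    rw [← Finset.sum_sub_distrib]
    exact Finset.sum_congr rfl fun b _ => by ring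
  intro a
  rw [← sub_eq_zero, ← Finset.sum_sub_distrib]
  have hga : (∑ b ∈ Finset.univ.filter (fun b : Eˣ => Algebra.norm F (b : E) = (a : F)),
      ((χ₁ b : ℂ) * ψ (Algebra.trace F E (b : E))
        - (χ₂ b : ℂ) * ψ (Algebra.trace F E (b : E)))) = g a := by
    exact Finset.sum_congr rfl fun b _ => by ring
  rw [hga]
  -- Fourier inversion
  have hzero : ∑ η : Fˣ →* ℂˣ, ((η a⁻¹ : ℂ) * ∑ a' : Fˣ, (η a' : ℂ) * g a') = 0 := by
    simp only [key, mul_zero, Finset.sum_const_zero]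
  have hswap : ∑ η : Fˣ →* ℂˣ, ((η a⁻¹ : ℂ) * ∑ a' : Fˣ, (η a' : ℂ) * g a')
      = ∑ a' : Fˣ, (∑ η : Fˣ →* ℂˣ, (η (a' * a⁻¹) : ℂ)) * g a' := by
    simp_rw [Finset.mul_sum]
    rw [Finset.sum_comm]
    refine Finset.sum_congr rfl fun a' _ => ?_
    rw [Finset.sum_mul]
    refine Finset.sum_congr rfl fun η _ => ?_
    rw [map_mul, Units.val_mul]
    ring
  have hsum : ∀ a' : Fˣ, (∑ η : Fˣ →* ℂˣ, (η (a' * a⁻¹) : ℂ))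
      = if a' = a then (Fintype.card (Fˣ →* ℂˣ) : ℂ) else 0 := by
    intro a'
    by_cases ha' : a' = a
    · simp [ha']
    · rw [if_neg ha']
      exact aux_sum_char_eq_zero (by
        intro hc
        exact ha' (by rwa [mul_inv_eq_one] at hc))
  rw [hswap] at hzero
  simp_rw [hsum, ite_mul, zero_mul] at hzero
  rw [Finset.sum_ite_eq' Finset.univ a (fun a' => (Fintype.card (Fˣ →* ℂˣ) : ℂ) * g a')] at hzero
  simp only [Finset.mem_univ, if_true] at hzero
  rcases mul_eq_zero.mp hzero with h' | h'
  · exact absurd h' (by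
      simp only [Nat.cast_eq_zero]
      exact Fintype.card_ne_zero)
  · exact h'
end

section
/- Let n ≥ 2 be an integer such that 2^n − 1 is prime (a Mersenne prime), and let ψ : F_2 → ℂˣ be the nontrivial additive character of F_2 (ψ(0) = 1, ψ(1) = −1). Let χ₁, χ₂ : F_{2^n}ˣ → ℂˣ be nontrivial multiplicative characters such that G(χ₁, ψ) = G(χ₂, ψ). Then there exists an integer j such that χ₁(x) = χ₂(x^(2^j)) for all x ∈ F_{2^n}ˣ. -/
open scoped Classical

/-- The Gauss sum over `E` of the multiplicative character `χ` with respect to the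
additive character `ψ` of the base field `F` (composed with the trace map):
`G(χ, ψ) = ∑_{x ∈ Eˣ} χ(x) ψ(Tr(x))`. -/
noncomputable def gaussSumE (F : Type) {E : Type} [Field F] [Field E] [Fintype F]
    [Fintype E] [Algebra F E] (χ : Eˣ →* ℂˣ) (ψ : AddChar F ℂ) : ℂ :=
  ∑ x : Eˣ, (χ x : ℂ) * ψ (Algebra.trace F E (x : E))

/-!
Write `χ₁ = χ₂ ^ a` with `a` prime to the prime `p = 2 ^ n - 1`. Since `ψ ∘ Tr` takes the rational
values `±1`, the equality of Gauss sums, reindexed along `x ↦ x ^ a`, is a `ℚ`-linear relation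
among the `p`-th roots of unity `χ₁ x`; as `1 + ζ + ⋯ + ζ ^ (p - 1)` is the minimal polynomial of
`ζ`, it forces `Tr (x ^ a) = Tr x` for all `x`. By Dedekind's independence of the characters
`σ (x ^ a)` and `σ x`, `σ ∈ Gal(E/𝔽₂)`, the power map `x ↦ x ^ a` is then a Galois automorphism,
that is, a power of the Frobenius.
-/

open Polynomial in
theorem IsPrimitiveRoot.eq_of_sum_mul_pow_eq_zero {K : Type*} [Field K] [CharZero K] {p : ℕ}
    [hp : Fact p.Prime] {ζ : K} (hζ : IsPrimitiveRoot ζ p) {c : ℕ → ℚ}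
    (h : ∑ i ∈ Finset.range p, (c i : K) * ζ ^ i = 0) {i j : ℕ} (hi : i < p) (hj : j < p) :
    c i = c j := by
  set Q : ℚ[X] := ∑ i ∈ Finset.range p, monomial i (c i)
  have hQ_coeff {i : ℕ} (hi : i < p) : Q.coeff i = c i := by
    simp [Q, coeff_monomial, hi]
  have hdvd : cyclotomic p ℚ ∣ Q := by
    rw [cyclotomic_eq_minpoly_rat hζ hp.out.pos]
    exact minpoly.dvd ℚ ζ (by simpa [Q, aeval_monomial, mul_comm] using h)
  have hdeg : Q.natDegree ≤ (cyclotomic p ℚ).natDegree := by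
    rw [natDegree_cyclotomic, Nat.totient_prime hp.out]
    refine natDegree_sum_le_of_forall_le _ _ fun k hk ↦ (natDegree_monomial_le _).trans ?_
    have := Finset.mem_range.mp hk
    omega
  have hQ := eq_leadingCoeff_mul_of_monic_of_dvd_of_natDegree_le (cyclotomic.monic p ℚ) hdvd hdeg
  have hc {i : ℕ} (hi : i < p) : c i = Q.leadingCoeff := by
    rw [← hQ_coeff hi]
    conv_lhs => rw [hQ, coeff_C_mul, cyclotomic_prime]
    simp [finsetSum_coeff, coeff_X_pow, hi]
  rw [hc hi, hc hj]

theorem MonoidHom.exists_zpowers_eq_top_isPrimitiveRoot {G M : Type*} [Group G] [CommMonoid M]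
    (hp : (Nat.card G).Prime) {χ : G →* M} (hχ : χ ≠ 1) :
    ∃ g : G, Subgroup.zpowers g = ⊤ ∧ IsPrimitiveRoot (χ g) (Nat.card G) := by
  have := Fact.mk hp
  obtain ⟨g, hg⟩ := DFunLike.ne_iff.mp hχ
  have hg1 : g ≠ 1 := by rintro rfl; simp at hg
  refine ⟨g, zpowers_eq_top_of_prime_card rfl hg1, ?_⟩
  rw [← orderOf_eq_prime (p := Nat.card G) (by rw [← map_pow, pow_card_eq_one', map_one]) hg]
  exact IsPrimitiveRoot.orderOf _

theorem MonoidHom.exists_eq_pow_of_prime_card {G R : Type*} [Group G] [CommRing R] [IsDomain R]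
    (hp : (Nat.card G).Prime) {χ : G →* Rˣ} (hχ : χ ≠ 1) (χ' : G →* Rˣ) : ∃ a : ℕ, χ' = χ ^ a := by
  obtain ⟨g, hg, hζ⟩ := exists_zpowers_eq_top_isPrimitiveRoot hp hχ
  have := NeZero.mk hp.ne_zero
  obtain ⟨a, -, ha⟩ := hζ.eq_pow_of_mem_rootsOfUnity (ξ := χ' g)
    (by rw [mem_rootsOfUnity, ← map_pow, pow_card_eq_one', map_one])
  refine ⟨a, eq_of_eqOn_dense (s := {g}) ?_ ?_⟩
  · rw [← Subgroup.zpowers_eq_closure, hg]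
  · simp [ha]

theorem MonoidHom.coprime_card_of_pow_ne_one {G M : Type*} [Group G] [CommMonoid M]
    (hp : (Nat.card G).Prime) {χ : G →* M} {a : ℕ} (hχa : χ ^ a ≠ 1) : (Nat.card G).Coprime a :=
  hp.coprime_iff_not_dvd.mpr fun ⟨k, hk⟩ ↦ hχa <| by
    ext x
    simp [hk, pow_mul, ← map_pow, pow_card_eq_one']

theorem Finset.sum_eq_sum_range_pow_of_zpowers_eq_top {G M : Type*} [Group G] [Fintype G]
    [AddCommMonoid M] {g : G} (hg : Subgroup.zpowers g = ⊤) (f : G → M) :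
    ∑ x, f x = ∑ i ∈ range (orderOf g), f (g ^ i) := by
  classical
  rw [← IsCyclic.image_range_orderOf (fun x ↦ hg ▸ Subgroup.mem_top x),
    sum_image fun i hi j hj ↦ pow_injOn_Iio_orderOf (by simpa using hi) (by simpa using hj)]

theorem MonoidHom.eq_of_sum_mul_eq_zero_of_prime_card {G K : Type*} [Group G] [Fintype G]
    [Field K] [CharZero K] (hp : (Nat.card G).Prime) {χ : G →* Kˣ} (hχ : χ ≠ 1) {h : G → ℚ}
    (hsum : ∑ x, (h x : K) * χ x = 0) (x y : G) : h x = h y := by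
  obtain ⟨g, hg, hζ⟩ := exists_zpowers_eq_top_isPrimitiveRoot hp hχ
  have := Fact.mk hp
  have hord : orderOf g = Nat.card G := by
    rw [← Nat.card_zpowers, hg, Subgroup.card_top]
  rw [Finset.sum_eq_sum_range_pow_of_zpowers_eq_top hg, hord] at hsum
  suffices hconst : ∀ z, h z = h 1 by rw [hconst x, hconst y]
  intro z
  classical
  obtain ⟨i, hi, rfl⟩ : ∃ i < orderOf g, g ^ i = z := by
    simpa using mem_zpowers_iff_mem_range_orderOf.mp (hg ▸ Subgroup.mem_top z)
  simpa using (IsPrimitiveRoot.coe_units_iff.mpr hζ).eq_of_sum_mul_pow_eq_zero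
    (c := fun i ↦ h (g ^ i)) (by simpa using hsum) (hord ▸ hi) hp.pos

theorem exists_algEquiv_of_trace_comp_eq {K L : Type*} [Field K] [Field L] [Algebra K L]
    [FiniteDimensional K L] [IsGalois K L] {f : Lˣ →* Lˣ} (hf : Function.Surjective f)
    (htr : ∀ x : Lˣ, Algebra.trace K L (f x) = Algebra.trace K L x) :
    ∃ σ : L ≃ₐ[K] L, ∀ x : Lˣ, (f x : L) = σ x := by
  by_contra! hne
  -- Dedekind: the characters `σ ∘ f` and `σ` of `Lˣ` would be pairwise distinct,
  -- yet their sums agree.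
  let v : (L ≃ₐ[K] L) ⊕ (L ≃ₐ[K] L) → (Lˣ →* L) :=
    Sum.elim (fun σ ↦ ((σ : L →* L).comp (Units.coeHom L)).comp f)
      (fun σ ↦ (σ : L →* L).comp (Units.coeHom L))
  have hv : Function.Injective v := by
    have hcoe {σ τ : L ≃ₐ[K] L} (h : ∀ x : Lˣ, σ x = τ x) : σ = τ := by
      ext y
      rcases eq_or_ne y 0 with rfl | hy
      · simp
      · exact h (Units.mk0 y hy)
    rintro (σ | σ) (τ | τ) hστ <;> have hστ' := DFunLike.congr_fun hστ
    · simp only [Sum.inl.injEq]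
      refine hcoe fun x ↦ ?_
      obtain ⟨y, rfl⟩ := hf x
      simpa [v] using hστ' y
    · obtain ⟨x, hx⟩ := hne (τ.trans σ.symm)
      exact (hx (by simpa [v, AlgEquiv.eq_symm_apply] using hστ' x)).elim
    · obtain ⟨x, hx⟩ := hne (σ.trans τ.symm)
      exact (hx (by simpa [v, AlgEquiv.symm_apply_eq, eq_comm] using hστ' x)).elim
    · simpa [v] using hcoe fun x ↦ by simpa [v] using hστ' x
  have hli := (linearIndependent_monoidHom Lˣ L).comp v hv
  rw [Fintype.linearIndependent_iff] at hli
  have := hli (Sum.elim 1 (-1)) (by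
    ext x
    have := congrArg (algebraMap K L) (htr x)
    rw [trace_eq_sum_automorphisms, trace_eq_sum_automorphisms] at this
    simp [Fintype.sum_sum_type, v, this]) (Sum.inl 1)
  simp at this

theorem FiniteField.exists_algEquiv_apply_eq_pow {K L : Type*} [Field K] [Fintype K] [Field L]
    [Finite L] [Algebra K L] (σ : L ≃ₐ[K] L) : ∃ j : ℕ, ∀ x, σ x = x ^ Fintype.card K ^ j := by
  obtain ⟨j, rfl⟩ := (bijective_frobeniusAlgEquivOfAlgebraic_pow K L).2 σ
  exact ⟨j, fun x ↦ by rw [AlgEquiv.coe_pow, coe_frobeniusAlgEquivOfAlgebraic_iterate]⟩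

theorem gaussSumE_eq_sum_pow (F : Type) {E : Type} [Field F] [Field E] [Fintype F] [Fintype E]
    [Algebra F E] (χ : Eˣ →* ℂˣ) (ψ : AddChar F ℂ) {a : ℕ} (ha : (Nat.card Eˣ).Coprime a) :
    gaussSumE F χ ψ = ∑ x : Eˣ, ((χ ^ a) x : ℂ) * ψ (Algebra.trace F E (x ^ a : Eˣ)) :=
  (Fintype.sum_bijective _ ha.pow_left_bijective _ _ fun x ↦ by simp [← map_pow]).symm

theorem trace_pow_eq_of_gaussSumE_pow_eq {E : Type} [Field E] [Fintype E] [Algebra (ZMod 2) E]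
    (hp : (Nat.card Eˣ).Prime) {ψ : AddChar (ZMod 2) ℂ} (hψ : ψ 1 = -1) {χ : Eˣ →* ℂˣ} {a : ℕ}
    (hχa : χ ^ a ≠ 1) (h : gaussSumE (ZMod 2) (χ ^ a) ψ = gaussSumE (ZMod 2) χ ψ) (x : Eˣ) :
    Algebra.trace (ZMod 2) E (x ^ a : Eˣ) = Algebra.trace (ZMod 2) E x := by
  have hψ' (t : ZMod 2) : ψ t = ((-1 : ℚ) ^ t.val : ℚ) := by
    obtain rfl | rfl : t = 0 ∨ t = 1 := by decide +revert
    · simp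
    · simp [hψ, ZMod.val_one]
  set s : Eˣ → ℚ := fun x ↦
    (-1) ^ (Algebra.trace (ZMod 2) E x).val - (-1) ^ (Algebra.trace (ZMod 2) E (x ^ a : Eˣ)).val
  have hsum : ∑ x, (s x : ℂ) * (χ ^ a) x = 0 := by
    rw [gaussSumE_eq_sum_pow _ χ ψ (MonoidHom.coprime_card_of_pow_ne_one hp hχa), gaussSumE,
      ← sub_eq_zero] at h
    simpa [s, hψ', sub_mul, mul_comm] using h
  have hs : s x = s 1 := MonoidHom.eq_of_sum_mul_eq_zero_of_prime_card hp hχa hsum x 1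
  have hval : ∀ u v : ZMod 2, (-1 : ℚ) ^ u.val = (-1) ^ v.val → u = v := by decide
  exact (hval _ _ (by simpa [s, sub_eq_zero] using hs)).symm

theorem gauss_sum_converse_mersenne_general
    (n : ℕ) (hmersenne : Nat.Prime (2 ^ n - 1))
    (E : Type) [Field E] [Fintype E] [Algebra (ZMod 2) E]
    (hE : Fintype.card E = 2 ^ n)
    (ψ : AddChar (ZMod 2) ℂ) (hψ : ψ 1 = -1)
    (χ₁ χ₂ : Eˣ →* ℂˣ) (hχ₁ : χ₁ ≠ 1) (hχ₂ : χ₂ ≠ 1)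
    (h : gaussSumE (ZMod 2) χ₁ ψ = gaussSumE (ZMod 2) χ₂ ψ) :
    ∃ j : ℕ, ∀ x : Eˣ, χ₁ x = χ₂ (x ^ 2 ^ j) := by
  have hp : (Nat.card Eˣ).Prime := by rwa [Nat.card_eq_fintype_card, Fintype.card_units, hE]
  obtain ⟨a, rfl⟩ := MonoidHom.exists_eq_pow_of_prime_card hp hχ₂ χ₁
  obtain ⟨σ, hσ⟩ := exists_algEquiv_of_trace_comp_eq (K := ZMod 2) (L := E) (f := powMonoidHom a)
    (MonoidHom.coprime_card_of_pow_ne_one hp hχ₁).pow_left_bijective.surjective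
    (trace_pow_eq_of_gaussSumE_pow_eq hp hψ hχ₁ h)
  obtain ⟨j, hj⟩ := FiniteField.exists_algEquiv_apply_eq_pow σ
  refine ⟨j, fun x ↦ ?_⟩
  have hx : x ^ a = x ^ 2 ^ j := Units.ext (by simpa [hj] using hσ x)
  rw [MonoidHom.pow_apply, ← map_pow, hx]

theorem gauss_sum_converse_mersenne
    (n : ℕ) (hn : 2 ≤ n) (hmersenne : Nat.Prime (2 ^ n - 1))
    (E : Type) [Field E] [Fintype E] [Algebra (ZMod 2) E]
    (hE : Fintype.card E = 2 ^ n)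
    (ψ : AddChar (ZMod 2) ℂ) (hψ : ψ 1 = -1)
    (χ₁ χ₂ : Eˣ →* ℂˣ) (hχ₁ : χ₁ ≠ 1) (hχ₂ : χ₂ ≠ 1)
    (h : gaussSumE (ZMod 2) χ₁ ψ = gaussSumE (ZMod 2) χ₂ ψ) :
    ∃ j : ℕ, ∀ x : Eˣ, χ₁ x = χ₂ (x ^ 2 ^ j) :=
  gauss_sum_converse_mersenne_general n hmersenne E hE ψ hψ χ₁ χ₂ hχ₁ hχ₂ h
end

section
/- Let p be a prime, n ≥ 1 an integer, and ψ : F_p → ℂˣ a nontrivial additive character. Let χ₁, χ₂ : F_{p^n}ˣ → ℂˣ be multiplicative characters with G(χ₁, ψ) = G(χ₂, ψ). Then χ₁ and χ₂ have the same restriction to the prime subfield: χ₁(ι(a)) = χ₂(ι(a)) for every a ∈ F_pˣ, where ι : F_p → F_{p^n} is the canonical embedding. -/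
open scoped Classical

/-!
Every term `χ(x) ψ(Tr x)` of `G(χ, ψ)` is a `p(q - 1)`-th root of unity, `q = p ^ n`. Choose
`w ≡ a (mod p)`, `w ≡ 1 (mod q - 1)`; the automorphism `ζ ↦ ζ ^ w` of `ℚ(ζ_{p(q-1)})` fixes the
values of `χ` and turns `ψ` into `ψ(a ·)`, so it maps `G(χ, ψ)` to `G(χ, ψ(a ·)) = χ(a)⁻¹ G(χ, ψ)`.
Applying it to `G(χ₁, ψ) = G(χ₂, ψ) ≠ 0` gives `χ₁(a) = χ₂(a)`.
-/

open Polynomial in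
theorem IsPrimitiveRoot.sum_pow_eq_sum_pow_of_sum_eq {K ι κ : Type*} [Field K] [CharZero K]
    [Fintype ι] [Fintype κ] {N : ℕ} [NeZero N] {ζ : K} (hζ : IsPrimitiveRoot ζ N)
    {f : ι → K} {g : κ → K} (hf : ∀ i, f i ^ N = 1) (hg : ∀ j, g j ^ N = 1)
    (h : ∑ i, f i = ∑ j, g j) {w : ℕ} (hw : w.Coprime N) :
    ∑ i, f i ^ w = ∑ j, g j ^ w := by
  -- `∑ X ^ aᵢ - ∑ X ^ bⱼ` vanishes at `ζ`, hence at its conjugate `ζ ^ w`.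
  choose a _ ha using fun i ↦ hζ.eq_pow_of_pow_eq_one (hf i)
  choose b _ hb using fun j ↦ hζ.eq_pow_of_pow_eq_one (hg j)
  set P : ℚ[X] := ∑ i, X ^ a i - ∑ j, X ^ b j
  have hP : aeval ζ P = 0 := by simp [P, ha, hb, h]
  have hmin : minpoly ℚ (ζ ^ w) = minpoly ℚ ζ := by
    rw [← cyclotomic_eq_minpoly_rat hζ (NeZero.pos N),
      ← cyclotomic_eq_minpoly_rat (hζ.pow_of_coprime w hw) (NeZero.pos N)]
  obtain ⟨Q, hQ⟩ := minpoly.dvd ℚ ζ hP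
  have hPw : aeval (ζ ^ w) P = 0 := by rw [hQ, map_mul, ← hmin, minpoly.aeval, zero_mul]
  simpa [P, pow_right_comm _ w, ha, hb, sub_eq_zero] using hPw

section GaussSumE

variable {F E : Type} [Field F] [Field E] [Fintype E] [Algebra F E]

theorem gaussSumE_eq_gaussSum [Fintype F] (χ : Eˣ →* ℂˣ) (ψ : AddChar F ℂ) :
    gaussSumE F χ ψ = gaussSum (MulChar.ofUnitHom χ)
      (ψ.compAddMonoidHom (Algebra.trace F E).toAddMonoidHom) := by
  rw [gaussSum, Fintype.sum_eq_add_sum_subtype_ne _ 0, MulChar.map_zero, zero_mul, zero_add,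
    gaussSumE]
  exact Fintype.sum_equiv unitsEquivNeZero _ _ fun x ↦ by simp

theorem gaussSumE_ne_zero [Fintype F] (χ : Eˣ →* ℂˣ) {ψ : AddChar F ℂ} (hψ : ψ ≠ 1) :
    gaussSumE F χ ψ ≠ 0 := by
  have hψE : ψ.compAddMonoidHom (Algebra.trace F E).toAddMonoidHom ≠ 1 := fun h ↦
    hψ <| AddChar.compAddMonoidHom_injective_left _ (Algebra.trace_surjective F E) h
  rw [gaussSumE_eq_gaussSum]
  by_cases hχ : MulChar.ofUnitHom χ = 1
  · rw [hχ, gaussSum_one_left hψE]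
    exact neg_ne_zero.mpr one_ne_zero
  · exact gaussSum_ne_zero_of_nontrivial (by exact_mod_cast Fintype.card_ne_zero) hχ
      (AddChar.IsPrimitive.of_ne_one hψE)

theorem mul_gaussSumE_mulShift [Fintype F] (χ : Eˣ →* ℂˣ) (ψ : AddChar F ℂ) (a : Fˣ) :
    χ (Units.map (algebraMap F E : F →* E) a) * gaussSumE F χ (ψ.mulShift a) =
      gaussSumE F χ ψ := by
  simp only [gaussSumE, AddChar.mulShift_apply, Finset.mul_sum]
  refine Fintype.sum_equiv (Equiv.mulLeft (Units.map (algebraMap F E : F →* E) a)) _ _ fun x ↦ ?_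
  have htr : Algebra.trace F E (algebraMap F E a * x) = a * Algebra.trace F E x := by
    rw [← Algebra.smul_def, map_smul, smul_eq_mul]
  simp only [Equiv.coe_mulLeft, map_mul, Units.val_mul, Units.coe_map, MonoidHom.coe_coe, htr]
  ring

theorem gaussSumE_term_pow_eq_one (p : ℕ) [CharP F p] (χ : Eˣ →* ℂˣ) (ψ : AddChar F ℂ)
    (x : Eˣ) : ((χ x : ℂ) * ψ (Algebra.trace F E x)) ^ (p * Fintype.card Eˣ) = 1 := by
  have hχ : (χ x : ℂ) ^ Fintype.card Eˣ = 1 := by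
    rw [← Units.val_pow_eq_pow_val, ← map_pow, pow_card_eq_one, map_one, Units.val_one]
  have hψ : ψ (Algebra.trace F E x) ^ p = 1 := by
    rw [← AddChar.map_nsmul_eq_pow, nsmul_eq_mul, CharP.cast_eq_zero, zero_mul,
      AddChar.map_zero_eq_one]
  rw [mul_pow, pow_mul', hχ, one_pow, one_mul, pow_mul, hψ, one_pow]

theorem gaussSumE_mulShift_natCast [Fintype F] (χ : Eˣ →* ℂˣ) (ψ : AddChar F ℂ) {w : ℕ}
    (hw : w ≡ 1 [MOD Fintype.card Eˣ]) :
    gaussSumE F χ (ψ.mulShift w) = ∑ x : Eˣ, ((χ x : ℂ) * ψ (Algebra.trace F E x)) ^ w := by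
  refine Finset.sum_congr rfl fun x _ ↦ ?_
  have hx : x ^ w = x := by
    rw [pow_eq_pow_iff_modEq.mpr (hw.of_dvd (orderOf_dvd_card (x := x))), pow_one]
  rw [mul_pow, AddChar.mulShift_apply, ← nsmul_eq_mul, AddChar.map_nsmul_eq_pow,
    ← Units.val_pow_eq_pow_val, ← map_pow χ, hx]

end GaussSumE

theorem FiniteField.coprime_card_units (K : Type*) [Field K] [Fintype K] (p : ℕ) [CharP K p] :
    p.Coprime (Fintype.card Kˣ) := by
  have hp : p ∣ Fintype.card K :=
    (CharP.cast_eq_zero_iff K p _).mp (FiniteField.cast_card_eq_zero K)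
  rw [Fintype.card_units]
  exact ((Nat.coprime_self_sub_right Fintype.card_pos).mpr
    (Nat.coprime_one_right _)).coprime_dvd_left hp

theorem ZMod.exists_natCast_eq_and_modEq_one {n m : ℕ} [NeZero n] (hnm : n.Coprime m)
    (a : (ZMod n)ˣ) : ∃ w : ℕ, (w : ZMod n) = a ∧ w ≡ 1 [MOD m] ∧ w.Coprime (n * m) := by
  obtain ⟨w, hwa, hw1⟩ := Nat.chineseRemainder hnm (a : ZMod n).val 1
  refine ⟨w, ?_, hw1, Nat.Coprime.mul_right ?_ ?_⟩
  · rw [(ZMod.natCast_eq_natCast_iff _ _ _).mpr hwa, ZMod.natCast_zmod_val]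
  · rw [Nat.Coprime, hwa.gcd_eq]
    exact ZMod.val_coe_unit_coprime a
  · rw [Nat.Coprime, hw1.gcd_eq]
    exact Nat.gcd_one_left m

theorem restriction_to_prime_subfield_eq_of_gauss_sum_eq_general
    (p : ℕ) [hp : Fact p.Prime]
    (E : Type) [Field E] [Fintype E] [Algebra (ZMod p) E]
    (ψ : AddChar (ZMod p) ℂ) (hψ : ψ ≠ 1)
    (χ₁ χ₂ : Eˣ →* ℂˣ)
    (h : gaussSumE (ZMod p) χ₁ ψ = gaussSumE (ZMod p) χ₂ ψ) :
    ∀ a : (ZMod p)ˣ,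
      χ₁ (Units.map (algebraMap (ZMod p) E : ZMod p →* E) a)
        = χ₂ (Units.map (algebraMap (ZMod p) E : ZMod p →* E) a) := by
  intro a
  have : CharP E p := charP_of_injective_algebraMap (algebraMap (ZMod p) E).injective p
  have : NeZero (p * Fintype.card Eˣ) := ⟨Nat.mul_ne_zero hp.out.ne_zero Fintype.card_ne_zero⟩
  obtain ⟨w, hwa, hw1, hwN⟩ :=
    ZMod.exists_natCast_eq_and_modEq_one (FiniteField.coprime_card_units E p) a
  have hconj : gaussSumE (ZMod p) χ₁ (ψ.mulShift a) = gaussSumE (ZMod p) χ₂ (ψ.mulShift a) := by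
    rw [← hwa, gaussSumE_mulShift_natCast _ _ hw1, gaussSumE_mulShift_natCast _ _ hw1]
    exact (Complex.isPrimitiveRoot_exp _ (NeZero.ne _)).sum_pow_eq_sum_pow_of_sum_eq
      (gaussSumE_term_pow_eq_one p χ₁ ψ) (gaussSumE_term_pow_eq_one p χ₂ ψ) h hwN
  rw [← mul_gaussSumE_mulShift χ₁ ψ a, ← mul_gaussSumE_mulShift χ₂ ψ a, hconj] at h
  exact Units.ext <| mul_right_cancel₀
    (gaussSumE_ne_zero χ₂ (AddChar.IsPrimitive.of_ne_one hψ a.ne_zero)) h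

theorem restriction_to_prime_subfield_eq_of_gauss_sum_eq
    (p n : ℕ) [hp : Fact p.Prime] (hn : 1 ≤ n)
    (E : Type) [Field E] [Fintype E] [Algebra (ZMod p) E]
    (hE : Fintype.card E = p ^ n)
    (ψ : AddChar (ZMod p) ℂ) (hψ : ψ ≠ 1)
    (χ₁ χ₂ : Eˣ →* ℂˣ)
    (h : gaussSumE (ZMod p) χ₁ ψ = gaussSumE (ZMod p) χ₂ ψ) :
    ∀ a : (ZMod p)ˣ,
      χ₁ (Units.map (algebraMap (ZMod p) E : ZMod p →* E) a)
        = χ₂ (Units.map (algebraMap (ZMod p) E : ZMod p →* E) a) :=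
  restriction_to_prime_subfield_eq_of_gauss_sum_eq_general p (hp := hp) E ψ hψ χ₁ χ₂ h
end
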